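/- arXiv:1305.5783 — 9 statements merged into one kernel-verified Lean document; each statement's English description precedes it below -/
import Mathlib

section
/- Let I be an interval partition with |I_n| ≥ 2^n for all n. Then the ideal I_poly(I) is σ-pseudobounded: I_poly(I) is a countable union of sets X_m such that every infinite subset of each X_m has a further infinite subset whose union belongs to I_poly(I). -/
/-!
`I_poly(I)` is the union over `m` of the levels `{A | ∀ n, |I_n ∩ A| ≤ m (n+1)^m}`, since every
integer polynomial is dominated on `ℕ` by some `m (n+1)^m`. Each level is pseudobounded by a
compactness argument: given infinitely many sets `F_i` in one level, take their limit `L` along a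
nonprincipal ultrafilter and extract a subsequence `F_{g t}` agreeing with `L` below `min I_t`.
Then on `I_n` every `F_{g t}` with `t > n + 1` agrees with `F_{g (n+1)}`, so the union of the
subsequence meets `I_n` in at most `(n + 2) m (n+1)^m` points.
-/

/-- The ideal `I_poly(I)` of an interval partition determined by `k`. -/
def IPoly (k : ℕ → ℕ) : Set (Set ℕ) :=
  {A | ∃ p : Polynomial ℤ,
      ∀ n : ℕ, ((Set.Ico (k n) (k (n + 1)) ∩ A).ncard : ℤ) ≤ p.eval (n : ℤ)}

open Filter Set Polynomial

def IsPseudobounded (J X : Set (Set ℕ)) : Prop :=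
  ∀ Y ⊆ X, Y.Infinite → ∃ Z ⊆ Y, Z.Infinite ∧ ⋃₀ Z ∈ J

def IPolyLevel (k : ℕ → ℕ) (m : ℕ) : Set (Set ℕ) :=
  {A | ∀ n, (Ico (k n) (k (n + 1)) ∩ A).ncard ≤ m * (n + 1) ^ m}

lemma Polynomial.exists_eval_natCast_le_mul_add_one_pow (p : ℤ[X]) :
    ∃ m : ℕ, ∀ n : ℕ, p.eval (n : ℤ) ≤ m * ((n : ℤ) + 1) ^ m := by
  set d := p.natDegree
  set c := ∑ i ∈ Finset.range (d + 1), (p.coeff i).natAbs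
  refine ⟨c + d, fun n => ?_⟩
  have hn : (1 : ℤ) ≤ n + 1 := by omega
  calc p.eval (n : ℤ) = ∑ i ∈ Finset.range (d + 1), p.coeff i * (n : ℤ) ^ i :=
        eval_eq_sum_range _
    _ ≤ ∑ i ∈ Finset.range (d + 1), ((p.coeff i).natAbs : ℤ) * ((n : ℤ) + 1) ^ d := by
        refine Finset.sum_le_sum fun i hi => mul_le_mul Int.le_natAbs ?_ (by positivity)
          (by positivity)
        exact (pow_le_pow_left₀ (by positivity) (by omega) i).trans
          (pow_le_pow_right₀ hn (Nat.lt_succ_iff.mp (Finset.mem_range.mp hi)))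
    _ = c * ((n : ℤ) + 1) ^ d := by push_cast [c, Finset.sum_mul]; rfl
    _ ≤ ((c + d : ℕ) : ℤ) * ((n : ℤ) + 1) ^ (c + d) := by
        gcongr <;> omega

lemma iPoly_eq_iUnion_iPolyLevel (k : ℕ → ℕ) : IPoly k = ⋃ m, IPolyLevel k m := by
  ext A
  simp only [IPoly, IPolyLevel, mem_ofPred_eq, mem_iUnion]
  constructor
  · rintro ⟨p, hp⟩
    obtain ⟨m, hm⟩ := p.exists_eval_natCast_le_mul_add_one_pow
    exact ⟨m, fun n => by exact_mod_cast (hp n).trans (hm n)⟩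
  · rintro ⟨m, hm⟩
    refine ⟨C (m : ℤ) * (X + 1) ^ m, fun n => ?_⟩
    simpa using (by exact_mod_cast hm n : ((_ : ℕ) : ℤ) ≤ (m : ℤ) * ((n : ℤ) + 1) ^ m)

lemma exists_strictMono_mem_iff_of_mem {α : Type*} (f : ℕ → Set α) (s : ℕ → Set α)
    (hs : ∀ t, (s t).Finite) :
    ∃ L : Set α, ∃ g : ℕ → ℕ, StrictMono g ∧ ∀ t, ∀ x ∈ s t, (x ∈ f (g t) ↔ x ∈ L) := by
  set L := {x | ∀ᶠ i in hyperfilter ℕ, x ∈ f i}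
  have hL : ∀ x, ∀ᶠ i in hyperfilter ℕ, (x ∈ f i ↔ x ∈ L) := by
    intro x
    by_cases hx : x ∈ L
    · exact hx.mono fun i hi => iff_of_true hi hx
    · exact (Ultrafilter.eventually_not.mpr hx).mono fun i hi => iff_of_false hi hx
  exact ⟨L, extraction_forall_of_frequently fun t =>
    ((hs t).eventually_all.mpr fun x _ => hL x).frequently.filter_mono Nat.hyperfilter_le_atTop⟩

lemma iUnion_inter_subset_iUnion_fin_of_mem_iff {α : Type*} {F s : ℕ → Set α} {L : Set α}
    (hs : Monotone s) (hF : ∀ t, ∀ x ∈ s t, (x ∈ F t ↔ x ∈ L)) (t : ℕ) :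
    (⋃ r, F r) ∩ s t ⊆ ⋃ r : Fin (t + 1), F r := by
  rintro x ⟨hxF, hx⟩
  obtain ⟨r, hr⟩ := mem_iUnion.1 hxF
  rcases le_or_gt r t with hrt | htr
  · exact mem_iUnion.2 ⟨⟨r, by omega⟩, hr⟩
  · exact mem_iUnion.2 ⟨⟨t, by omega⟩, (hF t x hx).2 ((hF r x (hs htr.le hx)).1 hr)⟩

lemma iUnion_mem_iPoly_of_mem_iff {k : ℕ → ℕ} (hk : Monotone k) {m : ℕ} {F : ℕ → Set ℕ}
    {L : Set ℕ} (hF : ∀ r, F r ∈ IPolyLevel k m) (hFL : ∀ t, ∀ x ∈ Iio (k t), (x ∈ F t ↔ x ∈ L)) :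
    ⋃ r, F r ∈ IPoly k := by
  refine ⟨(X + 2) * (C (m : ℤ) * (X + 1) ^ m), fun n => ?_⟩
  set I := Ico (k n) (k (n + 1))
  have hsub : I ∩ ⋃ r, F r ⊆ ⋃ r : Fin (n + 2), I ∩ F r := by
    rintro x ⟨hxI, hxF⟩
    obtain ⟨r, hr⟩ := mem_iUnion.1 <| iUnion_inter_subset_iUnion_fin_of_mem_iff
      (fun _ _ h => Iio_subset_Iio (hk h)) hFL (n + 1) ⟨hxF, hxI.2⟩
    exact mem_iUnion.2 ⟨r, hxI, hr⟩
  have hcount : (I ∩ ⋃ r, F r).ncard ≤ (n + 2) * (m * (n + 1) ^ m) := calc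
    _ ≤ (⋃ r : Fin (n + 2), I ∩ F r).ncard :=
        ncard_le_ncard hsub (finite_iUnion fun _ => (finite_Ico _ _).inter_of_left _)
    _ ≤ ∑ r : Fin (n + 2), (I ∩ F r).ncard := ncard_iUnion_le_of_fintype _
    _ ≤ ∑ _r : Fin (n + 2), m * (n + 1) ^ m := Finset.sum_le_sum fun r _ => hF r n
    _ = (n + 2) * (m * (n + 1) ^ m) := by simp
  simpa using (by exact_mod_cast hcount :
    ((_ : ℕ) : ℤ) ≤ ((n : ℤ) + 2) * ((m : ℤ) * ((n : ℤ) + 1) ^ m))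

lemma isPseudobounded_iPolyLevel {k : ℕ → ℕ} (hk : Monotone k) (m : ℕ) :
    IsPseudobounded (IPoly k) (IPolyLevel k m) := by
  intro Y hY hinf
  set f : ℕ → Set ℕ := fun i => hinf.natEmbedding Y i
  have hfY : ∀ i, f i ∈ Y := fun i => (hinf.natEmbedding Y i).2
  obtain ⟨L, g, hg, hgL⟩ := exists_strictMono_mem_iff_of_mem f (fun t => Iio (k t))
    fun t => finite_Iio _
  have hfg : Function.Injective (f ∘ g) :=
    Subtype.val_injective.comp ((hinf.natEmbedding Y).injective.comp hg.injective)
  refine ⟨range (f ∘ g), range_subset_iff.2 fun i => hfY (g i),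
    infinite_range_of_injective hfg, ?_⟩
  rw [sUnion_range]
  exact iUnion_mem_iPoly_of_mem_iff hk (fun r => hY (hfY (g r))) hgL

theorem iPoly_sigmaPseudobounded_general (k : ℕ → ℕ) (hmono : StrictMono k) :
    ∃ X : ℕ → Set (Set ℕ), IPoly k = ⋃ m, X m ∧
      ∀ m, ∀ Y ⊆ X m, Y.Infinite →
        ∃ Z ⊆ Y, Z.Infinite ∧ ⋃₀ Z ∈ IPoly k :=
  ⟨IPolyLevel k, iPoly_eq_iUnion_iPolyLevel k, isPseudobounded_iPolyLevel hmono.monotone⟩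

/-- For an interval partition with `|I_n| ≥ 2^n`, the ideal `I_poly(I)` is
σ-pseudobounded: it is a countable union of sets `X m` such that every infinite subset of
each `X m` has a further infinite subset whose union belongs to `I_poly(I)`. -/
theorem iPoly_sigmaPseudobounded (k : ℕ → ℕ) (h0 : k 0 = 0) (hmono : StrictMono k)
    (hsize : ∀ n : ℕ, 2 ^ n ≤ k (n + 1) - k n) :
    ∃ X : ℕ → Set (Set ℕ), IPoly k = ⋃ m, X m ∧
      ∀ m, ∀ Y ⊆ X m, Y.Infinite →
        ∃ Z ⊆ Y, Z.Infinite ∧ ⋃₀ Z ∈ IPoly k :=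
  iPoly_sigmaPseudobounded_general k hmono
end

section
/- Let I be an interval partition with |I_n| ≥ 2^n for all n. Fix a polynomial p and let X_p = {A ∈ I_poly(I) : ∀m, |I_m ∩ A| ≤ p(m)}. Then for every infinite Y ⊆ X_p there is a countably infinite family {B_m : m ∈ ω} ⊆ Y of distinct sets whose union ⋃_m B_m belongs to I_poly(I); in fact |I_i ∩ ⋃_m B_m| ≤ (i+1)·p(i) for all i. -/
open Set

variable {α : Type*}

theorem Set.Infinite.exists_infinite_inter_eq {Y : Set (Set α)} (hY : Y.Infinite) {s : Set α}
    (hs : s.Finite) : ∃ t, {A ∈ Y | s ∩ A = t}.Infinite := by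
  by_contra! hfin
  exact hY <| (hs.finite_subsets.biUnion fun t _ => hfin t).subset
    fun A hA => mem_biUnion inter_subset_left ⟨hA, rfl⟩

theorem Set.Infinite.exists_injective_inter_eq_of_le {Y : Set (Set α)} (hY : Y.Infinite)
    {s : ℕ → Set α} (hs : ∀ i, (s i).Finite) :
    ∃ B : ℕ → Set α, Function.Injective B ∧ (∀ m, B m ∈ Y) ∧
      ∀ ⦃i m⦄, i ≤ m → s i ∩ B m = s i ∩ B i := by
  obtain ⟨pick, hpick⟩ : ∃ pick : {S : Set (Set α) // S.Infinite} → Set α,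
      ∀ S, pick S ∈ S.1 :=
    ⟨fun S => S.2.nonempty.some, fun S => S.2.nonempty.some_mem⟩
  have step : ∀ (i : ℕ) (S : {S : Set (Set α) // S.Infinite}),
      ∃ T : {T : Set (Set α) // T.Infinite}, T.1 ⊆ S.1 \ {pick S} ∧
        ∀ A ∈ T.1, ∀ B ∈ T.1, s i ∩ A = s i ∩ B := by
    intro i S
    obtain ⟨t, ht⟩ := (S.2.sdiff (finite_singleton (pick S))).exists_infinite_inter_eq (hs i)
    exact ⟨⟨_, ht⟩, sep_subset _ _, fun A hA B hB => hA.2.trans hB.2.symm⟩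
  choose next hnext_sub hnext_agree using step
  let Z : ℕ → {S : Set (Set α) // S.Infinite} := fun m => Nat.rec ⟨Y, hY⟩ next m
  have hZ_succ : ∀ m, (Z (m + 1)).1 ⊆ (Z m).1 \ {pick (Z m)} := fun m => hnext_sub m (Z m)
  have hZ_anti : Antitone fun m => (Z m).1 :=
    antitone_nat_of_succ_le fun m => (hZ_succ m).trans sdiff_subset
  refine ⟨fun m => pick (Z (m + 1)), ?_,
    fun m => hZ_anti (Nat.zero_le (m + 1)) (hpick (Z (m + 1))), ?_⟩
  · have hne : ∀ m n, m < n → pick (Z (n + 1)) ≠ pick (Z (m + 1)) := fun m n hmn =>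
      (hZ_succ (m + 1) (hZ_anti (Nat.succ_le_succ hmn) (hpick (Z (n + 1))))).2
    intro m n heq
    rcases lt_trichotomy m n with hmn | rfl | hnm
    · exact absurd heq.symm (hne m n hmn)
    · rfl
    · exact absurd heq (hne n m hnm)
  · intro i m him
    exact hnext_agree i (Z i) _ (hZ_anti (Nat.succ_le_succ him) (hpick _)) _ (hpick _)

theorem Set.ncard_inter_iUnion_le_of_inter_eq {B : ℕ → Set α} {s : Set α} {i : ℕ}
    (hagree : ∀ m, i ≤ m → s ∩ B m = s ∩ B i) {c : ℤ}
    (hc : ∀ m, ((s ∩ B m).ncard : ℤ) ≤ c) :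
    ((s ∩ ⋃ m, B m).ncard : ℤ) ≤ (i + 1) * c := by
  have hunion : s ∩ ⋃ m, B m = ⋃ m ∈ Finset.range (i + 1), s ∩ B m := by
    ext x
    simp only [mem_inter_iff, mem_iUnion, Finset.mem_range, exists_prop]
    constructor
    · rintro ⟨hxs, m, hxm⟩
      rcases lt_or_ge m (i + 1) with hm | hm
      · exact ⟨m, hm, hxs, hxm⟩
      · have hxi : x ∈ s ∩ B i := hagree m (by omega) ▸ ⟨hxs, hxm⟩
        exact ⟨i, i.lt_succ_self, hxi⟩
    · rintro ⟨m, -, hxs, hxm⟩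
      exact ⟨hxs, m, hxm⟩
  calc ((s ∩ ⋃ m, B m).ncard : ℤ)
      ≤ ∑ m ∈ Finset.range (i + 1), ((s ∩ B m).ncard : ℤ) := by
        rw [hunion]; exact_mod_cast Finset.set_ncard_biUnion_le _ _
    _ ≤ ∑ _m ∈ Finset.range (i + 1), c := Finset.sum_le_sum fun m _ => hc m
    _ = (i + 1) * c := by simp

theorem iPoly_closed_piece_pseudobounded_general (k : ℕ → ℕ)
    (p : Polynomial ℤ)
    (Y : Set (Set ℕ))
    (hY : Y ⊆ {A ∈ IPoly k |
      ∀ m : ℕ, ((Set.Ico (k m) (k (m + 1)) ∩ A).ncard : ℤ) ≤ p.eval (m : ℤ)})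
    (hYinf : Y.Infinite) :
    ∃ B : ℕ → Set ℕ, Function.Injective B ∧ (∀ m, B m ∈ Y) ∧
      (∀ i : ℕ, ((Set.Ico (k i) (k (i + 1)) ∩ ⋃ m, B m).ncard : ℤ) ≤
        ((i : ℤ) + 1) * p.eval (i : ℤ)) ∧
      (⋃ m, B m) ∈ IPoly k := by
  obtain ⟨B, hB_inj, hBY, hagree⟩ :=
    hYinf.exists_injective_inter_eq_of_le fun i => finite_Ico (k i) (k (i + 1))
  have hbound : ∀ i : ℕ, ((Ico (k i) (k (i + 1)) ∩ ⋃ m, B m).ncard : ℤ) ≤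
      ((i : ℤ) + 1) * p.eval (i : ℤ) := fun i =>
    ncard_inter_iUnion_le_of_inter_eq (B := B) (fun _ him => hagree him)
      fun m => (hY (hBY m)).2 i
  exact ⟨B, hB_inj, hBY, hbound, (Polynomial.X + 1) * p, fun n => by simpa using hbound n⟩

/-- For an interval partition with `|I_n| ≥ 2^n` and a fixed integer
polynomial `p`, let `X_p = {A ∈ I_poly : ∀ m, |I_m ∩ A| ≤ p(m)}`. Every infinite
`Y ⊆ X_p` contains a countably infinite family of distinct sets `B m` whose union lies
in `I_poly(I)`; in fact `|I_i ∩ ⋃ m, B m| ≤ (i+1)·p(i)` for all `i`. -/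
theorem iPoly_closed_piece_pseudobounded (k : ℕ → ℕ) (h0 : k 0 = 0)
    (hmono : StrictMono k) (hsize : ∀ n : ℕ, 2 ^ n ≤ k (n + 1) - k n)
    (p : Polynomial ℤ)
    (Y : Set (Set ℕ))
    (hY : Y ⊆ {A ∈ IPoly k |
      ∀ m : ℕ, ((Set.Ico (k m) (k (m + 1)) ∩ A).ncard : ℤ) ≤ p.eval (m : ℤ)})
    (hYinf : Y.Infinite) :
    ∃ B : ℕ → Set ℕ, Function.Injective B ∧ (∀ m, B m ∈ Y) ∧
      (∀ i : ℕ, ((Set.Ico (k i) (k (i + 1)) ∩ ⋃ m, B m).ncard : ℤ) ≤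
        ((i : ℤ) + 1) * p.eval (i : ℤ)) ∧
      (⋃ m, B m) ∈ IPoly k :=
  iPoly_closed_piece_pseudobounded_general k p Y hY hYinf
end

section
/- Let I be a tall ideal on ω which, as a partial order under inclusion, is σ-pseudobounded. Then [ω₁]^{<ω} (finite subsets of ω₁ ordered by inclusion) is not Tukey reducible to (I, ⊆). -/
/-!
A Tukey map `f` sends each singleton `{w}` into one of the countably many pieces `X n`, so by
pigeonhole infinitely many `w` land in the same piece. Pseudoboundedness of that piece
yields infinitely many `w` whose images share a bound in `I`, whereas the singletons of
infinitely many points are unbounded among finite sets.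
-/

open Cardinal Set

def IsPseudoboundedIn {α : Type*} [LE α] (I X : Set α) : Prop :=
  ∀ Y ⊆ X, Y.Infinite → ∃ Z ⊆ Y, Z.Infinite ∧ ∃ b ∈ I, ∀ A ∈ Z, A ≤ b

theorem Set.Infinite.exists_infinite_fiber_of_finite_image {α β : Type*} {s : Set α}
    (hs : s.Infinite) {f : α → β} (hf : (f '' s).Finite) :
    ∃ a ∈ s, (s ∩ f ⁻¹' {f a}).Infinite := by
  by_contra! hfibers
  have hcover : s ⊆ ⋃ b ∈ f '' s, s ∩ f ⁻¹' {b} := fun a ha =>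
    mem_biUnion (mem_image_of_mem f ha) ⟨ha, rfl⟩
  refine hs ((hf.biUnion fun b hb => ?_).subset hcover)
  obtain ⟨a, ha, rfl⟩ := hb
  exact hfibers a ha

theorem IsPseudoboundedIn.exists_infinite_bounded {α β : Type*} [Preorder α] {I X : Set α}
    (hX : IsPseudoboundedIn I X) (hXI : X ⊆ I) {h : β → α} {T : Set β} (hT : T.Infinite)
    (hTX : MapsTo h T X) : ∃ T' ⊆ T, T'.Infinite ∧ ∃ b ∈ I, ∀ w ∈ T', h w ≤ b := by
  by_cases himage : (h '' T).Infinite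
  · obtain ⟨Z, hZ, hZinf, b, hbI, hbZ⟩ := hX _ (image_subset_iff.mpr hTX) himage
    refine ⟨T ∩ h ⁻¹' Z, inter_subset_left, fun hfin => hZinf ?_, b, hbI, fun w hw => hbZ _ hw.2⟩
    exact (hfin.image h).subset fun A hA => by
      obtain ⟨w, hw, rfl⟩ := hZ hA
      exact ⟨w, ⟨hw, hA⟩, rfl⟩
  · obtain ⟨a, ha, hfiber⟩ :=
      hT.exists_infinite_fiber_of_finite_image (not_infinite.mp himage)
    exact ⟨_, inter_subset_left, hfiber, h a, hXI (hTX ha), fun w hw => hw.2.le⟩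

theorem exists_infinite_bounded_of_sigma_pseudobounded {α : Type*} [Preorder α] {I : Set α}
    {X : ℕ → Set α} (hI : I = ⋃ n, X n) (hX : ∀ n, IsPseudoboundedIn I (X n)) {W : Type}
    (hW : ℵ₀ < #W) (h : W → α) (hhI : ∀ w, h w ∈ I) :
    ∃ T : Set W, T.Infinite ∧ ∃ b ∈ I, ∀ w ∈ T, h w ≤ b := by
  have hpiece : ∀ w, ∃ n, h w ∈ X n := fun w => mem_iUnion.mp (hI ▸ hhI w)
  choose piece hpiece using hpiece
  have : Infinite W := Cardinal.infinite_iff.mpr hW.le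
  obtain ⟨n, hfiber⟩ := Cardinal.exists_infinite_fiber piece (by rwa [mk_nat])
  obtain ⟨T, -, hT, hbounded⟩ := (hX n).exists_infinite_bounded
    (fun A hA => hI ▸ mem_iUnion_of_mem n hA) (infinite_coe_iff.mp hfiber)
    (fun w (hw : piece w = n) => hw ▸ hpiece w)
  exact ⟨T, hT, hbounded⟩

theorem Finset.bddAbove_image_singleton_iff {α : Type*} {s : Set α} :
    BddAbove ((fun a => ({a} : Finset α)) '' s) ↔ s.Finite := by
  classical
  constructor
  · rintro ⟨c, hc⟩
    exact c.finite_toSet.subset fun a ha => Finset.singleton_subset_iff.mp (hc ⟨a, ha, rfl⟩)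
  · rintro hs
    refine ⟨hs.toFinset, ?_⟩
    rintro _ ⟨a, ha, rfl⟩
    exact Finset.singleton_subset_iff.mpr (hs.mem_toFinset.mpr ha)

theorem finsets_omega1_not_tukey_below_general (I : Set (Set ℕ))
    (hσ : ∃ X : ℕ → Set (Set ℕ), I = ⋃ n, X n ∧
      ∀ n, ∀ Y ⊆ X n, Y.Infinite →
        ∃ Z ⊆ Y, Z.Infinite ∧ ∃ b ∈ I, ∀ A ∈ Z, A ⊆ b)
    (W : Type) (hW : Cardinal.mk W = Cardinal.aleph 1) :
    ¬ ∃ f : Finset W → Set ℕ, (∀ s : Finset W, f s ∈ I) ∧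
      ∀ S : Set (Finset W), (¬ ∃ b : Finset W, ∀ s ∈ S, s ⊆ b) →
        ¬ ∃ b ∈ I, ∀ s ∈ S, f s ⊆ b := by
  rintro ⟨f, hfI, htukey⟩
  obtain ⟨X, hI, hX⟩ := hσ
  obtain ⟨T, hT, b, hbI, hTb⟩ := exists_infinite_bounded_of_sigma_pseudobounded hI hX
    (hW ▸ aleph0_lt_aleph_one) (fun w => f {w}) fun w => hfI {w}
  refine htukey _ (fun hbdd => hT (Finset.bddAbove_image_singleton_iff.mp hbdd)) ⟨b, hbI, ?_⟩
  rintro _ ⟨w, hw, rfl⟩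
  exact hTb w hw

/-- If `I` is a tall ideal on `ω` which is σ-pseudobounded under `⊆`, then
`[ω₁]^{<ω}` (finite subsets of a set of size `ℵ₁`, ordered by inclusion) is not Tukey
reducible to `(I, ⊆)`: there is no map sending unbounded families of finite sets to
families unbounded in `I`. -/
theorem finsets_omega1_not_tukey_below (I : Set (Set ℕ))
    (hfin : ∀ A : Set ℕ, A.Finite → A ∈ I)
    (hdown : ∀ A ∈ I, ∀ B : Set ℕ, B ⊆ A → B ∈ I)
    (hunion : ∀ A ∈ I, ∀ B ∈ I, A ∪ B ∈ I)
    (htall : ∀ A : Set ℕ, A.Infinite → ∃ B ⊆ A, B.Infinite ∧ B ∈ I)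
    (hσ : ∃ X : ℕ → Set (Set ℕ), I = ⋃ n, X n ∧
      ∀ n, ∀ Y ⊆ X n, Y.Infinite →
        ∃ Z ⊆ Y, Z.Infinite ∧ ∃ b ∈ I, ∀ A ∈ Z, A ⊆ b)
    (W : Type) (hW : Cardinal.mk W = Cardinal.aleph 1) :
    ¬ ∃ f : Finset W → Set ℕ, (∀ s : Finset W, f s ∈ I) ∧
      ∀ S : Set (Finset W), (¬ ∃ b : Finset W, ∀ s ∈ S, s ⊆ b) →
        ¬ ∃ b ∈ I, ∀ s ∈ S, f s ⊆ b :=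
  finsets_omega1_not_tukey_below_general I hσ W hW
end

section
/- Let I be a tall proper ideal on ω which is σ-pseudobounded under inclusion. Then (I, ⊆) is not Tukey reducible to ω × ω₁ (with the product order). -/
/-!
A Tukey map `f : I → ℕ × ω₁` makes each fiber `{x | (f x).1 = m}` bounded in `I`: choosing for
every `j ∈ ℕ` one member of the fiber containing `j` gives a countable family whose image is
bounded (ω₁ has uncountable cofinality), so the family has a bound `c m ∈ I`, which then contains
every member of the fiber. Hence `I` would be generated by countably many sets `c m`, and a
diagonal sequence avoiding the finite unions `c 0 ∪ ⋯ ∪ c m` is an infinite set with no infinite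
subset in `I`, against tallness.
-/

open Cardinal Order Set

theorem Set.Countable.bddAbove_of_aleph0_lt_cof {α : Type*} [LinearOrder α] (hα : ℵ₀ < cof α)
    {s : Set α} (hs : s.Countable) : BddAbove s :=
  BddAbove.of_not_isCofinal fun h ↦
    (cof_le h).not_gt <| (mk_le_aleph0_iff.2 hs.to_subtype).trans_lt hα

theorem aleph0_lt_cof_toType_aleph_one : ℵ₀ < cof (aleph 1).ord.ToType := by
  rw [Ordinal.cof_toType, isRegular_aleph_one.cof_ord]
  exact aleph0_lt_aleph_one

theorem bddAbove_of_forall_countable_subset {ι : Type*} [Countable ι] {I : Set (Set ι)}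
    {T : Set I} (hT : ∀ S ⊆ T, S.Countable → BddAbove S) : BddAbove T := by
  choose g hgT hjg using fun j : {j : ι // ∃ x ∈ T, j ∈ (x : Set ι)} ↦ j.2
  obtain ⟨c, hc⟩ := hT (range g) (range_subset_iff.2 hgT) (countable_range g)
  exact ⟨c, fun x hx j hj ↦ hc (mem_range_self ⟨j, x, hx, hj⟩) (hjg _)⟩

theorem bddAbove_fiber_fst_of_tukey {ι P W : Type*} [Countable ι] [Preorder P] [LinearOrder W]
    (hW : ℵ₀ < cof W) {I : Set (Set ι)} {f : I → P × W}
    (hf : ∀ S : Set I, BddAbove (f '' S) → BddAbove S) (p : P) :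
    BddAbove {x | (f x).1 = p} := by
  refine bddAbove_of_forall_countable_subset fun S hSp hS ↦ hf S (bddAbove_prod.2 ⟨?_, ?_⟩)
  · refine (bddAbove_singleton (a := p)).mono ?_
    rintro _ ⟨_, ⟨x, hx, rfl⟩, rfl⟩
    exact hSp hx
  · exact ((hS.image f).image Prod.snd).bddAbove_of_aleph0_lt_cof hW

theorem exists_infinite_forall_subset_finite_of_monotone {e : ℕ → Set ℕ} (he : Monotone e)
    (hcompl : ∀ m, (e m)ᶜ.Infinite) :
    ∃ A : Set ℕ, A.Infinite ∧ ∀ B ⊆ A, ∀ k, B ⊆ e k → B.Finite := by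
  choose a hae hlt using fun m ↦ (hcompl m).exists_gt m
  refine ⟨range a, infinite_of_not_bddAbove ?_, fun B hBA k hBk ↦ ?_⟩
  · rintro ⟨N, hN⟩
    exact (hlt N).not_ge (hN (mem_range_self N))
  · refine ((finite_Iio k).image a).subset fun b hb ↦ ?_
    obtain ⟨m, rfl⟩ := hBA hb
    refine mem_image_of_mem a (mem_Iio.2 (lt_of_not_ge fun hkm ↦ hae m ?_))
    exact he hkm (hBk hb)

theorem not_exists_seq_cofinal_of_tall {I : Set (Set ℕ)}
    (hfin : ∀ A : Set ℕ, A.Finite → A ∈ I) (hunion : ∀ A ∈ I, ∀ B ∈ I, A ∪ B ∈ I)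
    (hproper : Set.univ ∉ I) (htall : ∀ A : Set ℕ, A.Infinite → ∃ B ⊆ A, B.Infinite ∧ B ∈ I) :
    ¬ ∃ c : ℕ → Set ℕ, (∀ m, c m ∈ I) ∧ ∀ A ∈ I, ∃ m, A ⊆ c m := by
  rintro ⟨c, hcI, hcof⟩
  have haccI : ∀ m, accumulate c m ∈ I := by
    intro m
    induction m with
    | zero => simpa [accumulate_zero_nat] using hcI 0
    | succ k ih => simpa [accumulate_succ] using hunion _ ih _ (hcI (k + 1))
  have hcompl : ∀ m, (accumulate c m)ᶜ.Infinite := fun m hfin' ↦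
    hproper (union_compl_self (accumulate c m) ▸ hunion _ (haccI m) _ (hfin _ hfin'))
  obtain ⟨A, hAinf, hA⟩ :=
    exists_infinite_forall_subset_finite_of_monotone monotone_accumulate hcompl
  obtain ⟨B, hBA, hBinf, hBI⟩ := htall A hAinf
  obtain ⟨k, hBk⟩ := hcof B hBI
  exact hBinf (hA B hBA k (hBk.trans subset_accumulate))

theorem sigmaPseudobounded_not_tukey_le_omega_times_omega1_general (I : Set (Set ℕ))
    (hfin : ∀ A : Set ℕ, A.Finite → A ∈ I)
    (hunion : ∀ A ∈ I, ∀ B ∈ I, A ∪ B ∈ I)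
    (hproper : Set.univ ∉ I)
    (htall : ∀ A : Set ℕ, A.Infinite → ∃ B ⊆ A, B.Infinite ∧ B ∈ I) :
    ¬ ∃ f : I → ℕ × (Cardinal.aleph 1).ord.ToType,
      ∀ S : Set I, (¬ ∃ b : I, ∀ x ∈ S, (x : Set ℕ) ⊆ (b : Set ℕ)) →
        ¬ ∃ b : ℕ × (Cardinal.aleph 1).ord.ToType, ∀ x ∈ S, f x ≤ b := by
  rintro ⟨f, hf⟩
  have hTukey : ∀ S : Set I, BddAbove (f '' S) → BddAbove S := fun S hS ↦
    not_not.1 fun hS' ↦ hf S hS' ⟨_, fun x hx ↦ hS.choose_spec (mem_image_of_mem f hx)⟩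
  choose c hc using bddAbove_fiber_fst_of_tukey aleph0_lt_cof_toType_aleph_one hTukey
  exact not_exists_seq_cofinal_of_tall hfin hunion hproper htall
    ⟨fun m ↦ c m, fun m ↦ (c m).2, fun A hA ↦ ⟨_, hc (f ⟨A, hA⟩).1 (a := ⟨A, hA⟩) rfl⟩⟩

/-- If `I` is a tall proper ideal on `ω` which is σ-pseudobounded under
inclusion, then `(I, ⊆)` is not Tukey reducible to `ω × ω₁` with the product
(coordinatewise) order: there is no Tukey map from `I` to `ℕ × ω₁`. -/
theorem sigmaPseudobounded_not_tukey_le_omega_times_omega1 (I : Set (Set ℕ))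
    (hfin : ∀ A : Set ℕ, A.Finite → A ∈ I)
    (hdown : ∀ A ∈ I, ∀ B : Set ℕ, B ⊆ A → B ∈ I)
    (hunion : ∀ A ∈ I, ∀ B ∈ I, A ∪ B ∈ I)
    (hproper : Set.univ ∉ I)
    (htall : ∀ A : Set ℕ, A.Infinite → ∃ B ⊆ A, B.Infinite ∧ B ∈ I)
    (hσ : ∃ X : ℕ → Set (Set ℕ), I = ⋃ n, X n ∧
      ∀ n, ∀ Y ⊆ X n, Y.Infinite →
        ∃ Z ⊆ Y, Z.Infinite ∧ ∃ b ∈ I, ∀ A ∈ Z, A ⊆ b) :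
    ¬ ∃ f : I → ℕ × (Cardinal.aleph 1).ord.ToType,
      ∀ S : Set I, (¬ ∃ b : I, ∀ x ∈ S, (x : Set ℕ) ⊆ (b : Set ℕ)) →
        ¬ ∃ b : ℕ × (Cardinal.aleph 1).ord.ToType, ∀ x ∈ S, f x ≤ b :=
  sigmaPseudobounded_not_tukey_le_omega_times_omega1_general I hfin hunion hproper htall
end

section
/- Suppose 𝔟 > ω₁ holds. Let D be a directed set with |D| ≤ ω₁ and define I = {A ∈ [D]^{≤ω} : for every x ∈ D, A ∩ {y : y ≤ x} is finite}. Then I is a P-ideal on the countable subsets of D: for every countable family {A_n : n ∈ ω} ⊆ I there is A ∈ I with A_n ⊆* A for all n. -/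
/-- The bounding number 𝔟: the least cardinality of a family of functions `ω → ω`
unbounded with respect to eventual domination `<*`. -/
noncomputable def boundingNum : Cardinal :=
  sInf {c : Cardinal | ∃ F : Set (ℕ → ℕ),
    (¬ ∃ g : ℕ → ℕ, ∀ f ∈ F, ∀ᶠ n in Filter.atTop, f n < g n) ∧ Cardinal.mk F = c}

/-!
Fix injections `c n : A n → ℕ`. For a test set `S` meeting every `A n` in a finite set, the
function `n ↦ max (c n '' (A n ∩ S)) + 1` records how far `c n` must be followed before `A n ∩ S`
is exhausted. With fewer than `𝔟` test sets, a single `g` eventually dominates all these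
functions, and `B = ⋃ n, {a ∈ A n | g n ≤ c n a}` works: it omits only the finitely many
`a ∈ A n` with `c n a < g n`, while for `n` beyond the domination point its `n`-th piece misses
`S` altogether, so `B ∩ S` lies in the finite set `⋃ n < N, A n ∩ S`.
-/

open Filter Set

theorem exists_eventually_lt_of_mk_lt_boundingNum {ι : Type} (f : ι → ℕ → ℕ)
    (hι : Cardinal.mk ι < boundingNum) : ∃ g : ℕ → ℕ, ∀ i, ∀ᶠ n in atTop, f i n < g n := by
  by_contra hunbounded
  have hrange : boundingNum ≤ Cardinal.mk (range f) :=
    csInf_le (OrderBot.bddBelow _)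
      ⟨range f, fun ⟨g, hg⟩ => hunbounded ⟨g, fun i => hg (f i) ⟨i, rfl⟩⟩, rfl⟩
  exact (hrange.trans Cardinal.mk_range_le).not_gt hι

section TailUnion

variable {α : Type*} (A : ℕ → Set α) (c : ℕ → α → ℕ) (g : ℕ → ℕ)

def tailUnion : Set α := ⋃ n, {a ∈ A n | g n ≤ c n a}

theorem tailUnion_countable (hA : ∀ n, (A n).Countable) : (tailUnion A c g).Countable :=
  countable_iUnion fun n => (hA n).mono (sep_subset _ _)

theorem diff_tailUnion_finite (hc : ∀ n, InjOn (c n) (A n)) (n : ℕ) :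
    (A n \ tailUnion A c g).Finite := by
  refine Finite.of_finite_image ((finite_Iio (g n)).subset ?_) ((hc n).mono sdiff_subset)
  rintro _ ⟨a, ⟨ha, hnot⟩, rfl⟩
  exact not_le.mp fun hle => hnot (mem_iUnion.mpr ⟨n, ha, hle⟩)

theorem tailUnion_inter_finite {S : Set α} (hS : ∀ n, (A n ∩ S).Finite)
    (hg : ∀ᶠ n in atTop, ∀ a ∈ A n ∩ S, c n a < g n) : (tailUnion A c g ∩ S).Finite := by
  obtain ⟨N, hN⟩ := eventually_atTop.mp hg
  refine ((finite_Iio N).biUnion fun n _ => hS n).subset ?_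
  rintro a ⟨haB, haS⟩
  obtain ⟨n, haA, hle⟩ := mem_iUnion.mp haB
  have hn : n < N := not_le.mp fun hNn => (hN n hNn a ⟨haA, haS⟩).not_ge hle
  exact mem_biUnion hn ⟨haA, haS⟩

end TailUnion

theorem exists_almost_superset_of_mk_lt_boundingNum {α : Type*} {ι : Type} (S : ι → Set α)
    (hι : Cardinal.mk ι < boundingNum) (A : ℕ → Set α) (hA : ∀ n, (A n).Countable)
    (hAS : ∀ n i, (A n ∩ S i).Finite) :
    ∃ B : Set α, (B.Countable ∧ ∀ i, (B ∩ S i).Finite) ∧ ∀ n, (A n \ B).Finite := by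
  choose c hc using fun n => countable_iff_exists_injOn.mp (hA n)
  have hbound : ∀ i n, ∃ m, ∀ a ∈ A n ∩ S i, c n a < m := fun i n => by
    obtain ⟨m, hm⟩ := ((hAS n i).image (c n)).bddAbove
    exact ⟨m + 1, fun a ha => Nat.lt_succ_of_le (hm ⟨a, ha, rfl⟩)⟩
  choose f hf using hbound
  obtain ⟨g, hg⟩ := exists_eventually_lt_of_mk_lt_boundingNum f hι
  refine ⟨tailUnion A c g, ⟨tailUnion_countable A c g hA, fun i => ?_⟩,
    diff_tailUnion_finite A c g hc⟩
  exact tailUnion_inter_finite A c g (fun n => hAS n i)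
    ((hg i).mono fun n hn a ha => (hf i n a ha).trans hn)

theorem trace_orthogonal_is_PIdeal_general (hb : Cardinal.aleph 1 < boundingNum)
    (D : Type) [PartialOrder D]
    (hsize : Cardinal.mk D ≤ Cardinal.aleph 1)
    (A : ℕ → Set D)
    (hA : ∀ n, (A n).Countable ∧ ∀ x : D, (A n ∩ {y : D | y ≤ x}).Finite) :
    ∃ B : Set D, (B.Countable ∧ ∀ x : D, (B ∩ {y : D | y ≤ x}).Finite) ∧
      ∀ n, (A n \ B).Finite :=
  exists_almost_superset_of_mk_lt_boundingNum (fun x : D => {y : D | y ≤ x})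
    (hsize.trans_lt hb) A (fun n => (hA n).1) fun n x => (hA n).2 x

/-- Assume `𝔟 > ω₁`. Let `D` be a directed set of size `≤ ω₁` and let
`I = {A ∈ [D]^{≤ω} : ∀ x ∈ D, A ∩ pred(x) is finite}`. Then `I` is a P-ideal: for any
countably many members `A n` of `I` there is `A ∈ I` with `A n ⊆* A` for all `n`. -/
theorem trace_orthogonal_is_PIdeal (hb : Cardinal.aleph 1 < boundingNum)
    (D : Type) [PartialOrder D] (hdir : ∀ a b : D, ∃ c, a ≤ c ∧ b ≤ c)
    (hsize : Cardinal.mk D ≤ Cardinal.aleph 1)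
    (A : ℕ → Set D)
    (hA : ∀ n, (A n).Countable ∧ ∀ x : D, (A n ∩ {y : D | y ≤ x}).Finite) :
    ∃ B : Set D, (B.Countable ∧ ∀ x : D, (B ∩ {y : D | y ≤ x}).Finite) ∧
      ∀ n, (A n \ B).Finite :=
  trace_orthogonal_is_PIdeal_general hb D hsize A hA
end

section
/- Fix distinct strictly increasing functions f_0, ..., enumerated as f_{s(i)} ∈ ω^ω for i < ω+2 along a chain s(0) < s(1) < ... < s(ω) < s(ω+1), and natural numbers n(i) for i < ω+1, such that for all i < j in ω+2 (with i,j comparable in the chain order): f_{s(j)}(Δ(f_{s(i)}, f_{s(j)})) = n(i), where Δ(f,g) is the least n with f(n) ≠ g(n). Then there is no infinite set A ⊆ ω and fixed n with n(i) = n for all i ∈ A. -/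
/-- `Δ f g`: the least point of disagreement of two functions `ω → ω`. -/
noncomputable def deltaFn (f g : ℕ → ℕ) : ℕ := sInf {n : ℕ | f n ≠ g n}

/-!
If `n` took the constant value `m` on an infinite set `a 0 < a 1 < ⋯`, put `g k := f (a k)` and
`D k := Δ(g k, g (k + 1))`, so that `g (k + 1) (D k) = m` for every `k`. Then `D (k + 1) < D k`:
since `g (k + 2) (D (k + 1)) = m`, we have `g (k + 1) (D (k + 1)) ≠ m`, so `D k ≠ D (k + 1)`;
and if `D k < D (k + 1)`, then `g (k + 2)` agrees with `g (k + 1)` at `D k`, so it takes the value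
`m` at both `D k` and `D (k + 1)`, contradicting injectivity. A strictly decreasing sequence of
natural numbers is impossible.
-/

open Function

lemma apply_deltaFn_ne {f g : ℕ → ℕ} (h : f ≠ g) : f (deltaFn f g) ≠ g (deltaFn f g) :=
  Nat.sInf_mem (Function.ne_iff.mp h)

lemma apply_eq_of_lt_deltaFn {f g : ℕ → ℕ} {k : ℕ} (hk : k < deltaFn f g) : f k = g k :=
  not_not.mp fun hne => (Nat.sInf_le hne).not_gt hk

lemma deltaFn_lt_deltaFn {f g h : ℕ → ℕ} {m : ℕ} (hh : Injective h) (hgh : g ≠ h)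
    (hg : g (deltaFn f g) = m) (hm : h (deltaFn g h) = m) : deltaFn g h < deltaFn f g := by
  have hne : deltaFn f g ≠ deltaFn g h := fun heq =>
    apply_deltaFn_ne hgh (by rw [← heq, hg, heq, hm])
  refine (lt_or_gt_of_ne hne).resolve_left fun hlt => hne (hh ?_)
  rw [← apply_eq_of_lt_deltaFn hlt, hg, hm]

lemma strictAnti_deltaFn_succ {g : ℕ → ℕ → ℕ} {m : ℕ} (hinj : ∀ k, Injective (g k))
    (hne : ∀ k, g k ≠ g (k + 1)) (hm : ∀ k, g (k + 1) (deltaFn (g k) (g (k + 1))) = m) :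
    StrictAnti fun k => deltaFn (g k) (g (k + 1)) :=
  strictAnti_nat_of_succ_lt fun k =>
    deltaFn_lt_deltaFn (hinj (k + 2)) (hne (k + 1)) (hm k) (hm (k + 1))

theorem no_infinite_constant_n_general (f : ℕ → ℕ → ℕ) (n : ℕ → ℕ)
    (hmono : ∀ i, StrictMono (f i))
    (hdist : ∀ i j, i ≠ j → f i ≠ f j)
    (h1 : ∀ i j, i < j → f j (deltaFn (f i) (f j)) = n i) :
    ¬ ∃ A : Set ℕ, A.Infinite ∧ ∃ m : ℕ, ∀ i ∈ A, n i = m := by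
  rintro ⟨A, hA, m, hm⟩
  set a := Nat.nth (· ∈ A)
  have ha : StrictMono a := Nat.nth_strictMono hA
  have hval : ∀ k, f (a (k + 1)) (deltaFn (f (a k)) (f (a (k + 1)))) = m := fun k =>
    (h1 _ _ (ha k.lt_succ_self)).trans (hm _ (Nat.nth_mem_of_infinite hA k))
  exact not_strictAnti_of_wellFoundedLT _ <| strictAnti_deltaFn_succ
    (fun k => (hmono (a k)).injective) (fun k => hdist _ _ (ha k.lt_succ_self).ne) hval

/-- Given pairwise distinct strictly increasing functions
`f 0, f 1, …, fω, fω1` (indexed along a chain of order type `ω + 2`) and values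
`n i` (`i < ω`) and `nω` such that for all `i < j` in `ω + 2` the later function `g`
and earlier function `h` satisfy `g (Δ(h,g)) = n(earlier index)`, there is no infinite
`A ⊆ ω` on which `n` is constant. -/
theorem no_infinite_constant_n (f : ℕ → ℕ → ℕ) (fω fω1 : ℕ → ℕ) (n : ℕ → ℕ) (nω : ℕ)
    (hmono : ∀ i, StrictMono (f i)) (hmω : StrictMono fω) (hmω1 : StrictMono fω1)
    (hdist : ∀ i j, i ≠ j → f i ≠ f j)
    (hd1 : ∀ i, f i ≠ fω) (hd2 : ∀ i, f i ≠ fω1) (hd3 : fω ≠ fω1)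
    (h1 : ∀ i j, i < j → f j (deltaFn (f i) (f j)) = n i)
    (h2 : ∀ i, fω (deltaFn (f i) fω) = n i)
    (h3 : ∀ i, fω1 (deltaFn (f i) fω1) = n i)
    (h4 : fω1 (deltaFn fω fω1) = nω) :
    ¬ ∃ A : Set ℕ, A.Infinite ∧ ∃ m : ℕ, ∀ i ∈ A, n i = m :=
  no_infinite_constant_n_general f n hmono hdist h1
end

section
/- Let B ⊆ ω^ω be a set of strictly increasing functions such that there exist n(f) ∈ ω for f ∈ B and a linear enumeration of B along which for any earlier f and later g, g(Δ(f,g)) = n(f), and such that no infinite subset of B has constant n-value. Then the closure cl(B) of B in the Baire space ω^ω is compact. -/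
lemma deltaFn_eq {f g : ℕ → ℕ} {k : ℕ} (h : ∀ m < k, f m = g m) (hk : f k ≠ g k) :
    deltaFn f g = k :=
  le_antisymm (Nat.sInf_le hk)
    (le_csInf ⟨k, hk⟩ fun m hm => not_lt.1 fun hlt => hm (h m hlt))

/-- Given a fixed prefix of length `k`, only finitely many values occur at position `k`. -/
lemma values_finite (f : ℕ → ℕ → ℕ) (n : ℕ → ℕ)
    (h1 : ∀ i j, i < j → f j (deltaFn (f i) (f j)) = n i)
    (k : ℕ) (σ : ℕ → ℕ) :
    {v : ℕ | ∃ i, (∀ m < k, f i m = σ m) ∧ f i k = v}.Finite := by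
  set S := {v : ℕ | ∃ i, (∀ m < k, f i m = σ m) ∧ f i k = v} with hS
  by_contra hinf
  replace hinf : S.Infinite := hinf
  obtain ⟨v0, i1, hi1, hv0⟩ := hinf.nonempty
  set F := (fun j => f j k) '' {j | j ≤ i1} with hF
  have hFfin : F.Finite := (Set.finite_Iic i1).image _
  have hinf1 : (S \ F).Infinite := hinf.diff hFfin
  obtain ⟨v1, hv1⟩ := hinf1.nonempty
  obtain ⟨v2, hv2⟩ := (hinf1.diff (Set.finite_singleton v1)).nonempty
  obtain ⟨⟨j1, hj1, hv1'⟩, hv1F⟩ := hv1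
  obtain ⟨⟨⟨j2, hj2, hv2'⟩, hv2F⟩, hv2v1⟩ := hv2
  have hne : v1 ≠ v2 := fun h => (Set.mem_singleton_iff.not.1 hv2v1) h.symm
  have hi1F : f i1 k ∈ F := ⟨i1, le_refl i1, rfl⟩
  -- witnesses are strictly above i1
  have hij1 : i1 < j1 := by
    by_contra h
    exact hv1F ⟨j1, not_lt.1 h, hv1'⟩
  have hij2 : i1 < j2 := by
    by_contra h
    exact hv2F ⟨j2, not_lt.1 h, hv2'⟩
  have hd1 : deltaFn (f i1) (f j1) = k :=
    deltaFn_eq (fun m hm => (hi1 m hm).trans (hj1 m hm).symm)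
      (fun h => hv1F (hv1' ▸ h ▸ hi1F))
  have hd2 : deltaFn (f i1) (f j2) = k :=
    deltaFn_eq (fun m hm => (hi1 m hm).trans (hj2 m hm).symm)
      (fun h => hv2F (hv2' ▸ h ▸ hi1F))
  have e1 : v1 = n i1 := by rw [← hv1', ← hd1]; exact h1 i1 j1 hij1
  have e2 : v2 = n i1 := by rw [← hv2', ← hd2]; exact h1 i1 j2 hij2
  exact hne (e1.trans e2.symm)

/-- The tree of initial segments is finitely branching: each level is finite. -/
lemma prefixes_finite (f : ℕ → ℕ → ℕ) (n : ℕ → ℕ)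
    (h1 : ∀ i j, i < j → f j (deltaFn (f i) (f j)) = n i) (k : ℕ) :
    (Set.range fun i => fun m : Fin k => f i (m : ℕ)).Finite := by
  induction k with
  | zero => exact Set.toFinite _
  | succ k ih =>
    have key : (Set.range fun i => fun m : Fin (k + 1) => f i (m : ℕ)) ⊆
        ⋃ σ ∈ Set.range fun i => fun m : Fin k => f i (m : ℕ),
          ⋃ v ∈ {v : ℕ | ∃ i, (∀ m < k, f i m =
              (fun m' => if h : m' < k then σ ⟨m', h⟩ else 0) m) ∧ f i k = v},
            ({Fin.snoc σ v} : Set (Fin (k + 1) → ℕ)) := by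
      rintro w ⟨i, rfl⟩
      refine Set.mem_biUnion ⟨i, rfl⟩ ?_
      refine Set.mem_biUnion (show f i k ∈ _ from ⟨i, fun m hm => by simp [hm], rfl⟩) ?_
      refine Set.mem_singleton_iff.2 ?_
      funext m
      simp only [Fin.snoc]
      split
      · simp [Fin.castLT]
      · have hmk : (m : ℕ) = k :=
          le_antisymm (Nat.lt_succ_iff.1 m.isLt) (not_lt.1 (by assumption))
        simp [hmk]
    exact Set.Finite.subset
      (Set.Finite.biUnion ih fun σ _ =>
        Set.Finite.biUnion (values_finite f n h1 k _) fun v _ => Set.finite_singleton _) key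

/-- Let `B = {f i : i ∈ ω}` be a family of pairwise distinct strictly
increasing functions in `ω^ω` enumerated so that for earlier `f i` and later `f j`
(`i < j`) one has `f j (Δ(f i, f j)) = n i`, and suppose no infinite subset of `ω` has
constant `n`-value. Then the closure of `B` in the Baire space `ω^ω` is compact
(equivalently, its tree of finite initial segments is finitely branching). -/
theorem closure_isCompact (f : ℕ → ℕ → ℕ) (n : ℕ → ℕ)
    (hmono : ∀ i, StrictMono (f i))
    (hdist : ∀ i j, i ≠ j → f i ≠ f j)
    (h1 : ∀ i j, i < j → f j (deltaFn (f i) (f j)) = n i)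
    (hnoconst : ¬ ∃ A : Set ℕ, A.Infinite ∧ ∃ m : ℕ, ∀ i ∈ A, n i = m) :
    IsCompact (closure (Set.range f)) := by
  have hcol : ∀ k, (Set.range fun i => f i k).Finite := by
    intro k
    have hfin := prefixes_finite f n h1 (k + 1)
    have hsub : (Set.range fun i => f i k) ⊆
        (fun w : Fin (k + 1) → ℕ => w ⟨k, Nat.lt_succ_self k⟩) ''
          (Set.range fun i => fun m : Fin (k + 1) => f i (m : ℕ)) := by
      rintro v ⟨i, rfl⟩
      exact ⟨_, ⟨i, rfl⟩, rfl⟩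
    exact (hfin.image _).subset hsub
  choose N hN using fun k => (hcol k).bddAbove
  have hK : IsCompact (Set.pi Set.univ fun k => Set.Iic (N k)) :=
    isCompact_univ_pi fun k => (Set.finite_Iic (N k)).isCompact
  have hKc : IsClosed (Set.pi Set.univ fun k => Set.Iic (N k)) :=
    isClosed_set_pi fun k _ => isClosed_Iic
  have hsub : Set.range f ⊆ Set.pi Set.univ fun k => Set.Iic (N k) := by
    rintro g ⟨i, rfl⟩ k _
    exact hN k ⟨i, rfl⟩
  exact hK.of_isClosed_subset isClosed_closure (closure_minimal hsub hKc)
end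

section
/- Let S be an ω₁-tree in which every node has uncountably many nodes above it and no uncountable chains. Then there is no uncountable T ⊆ S with the property that for every countable A ⊆ T there is a finite F ⊆ S such that every element of A lies below some element of F. -/
/-!
An uncountable set `U` in a tree without uncountable chains contains two incomparable nodes
`a, b`. The nodes of `U` below `a` form a chain, so uncountably many nodes of `U` are either
incomparable with `a` or above `a`, and the latter are all incomparable with `b`. Iterating this
extracts from the uncountable set `T` an infinite sequence of pairwise incomparable nodes. A finite
set covering them from above would cover two of them by the same node, but nodes below a common
node of a tree are comparable.
-/

open Set

theorem exists_seq_rel_of_forall_exists_subset {α : Type*} {P : Set α → Prop}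
    {R : α → α → Prop} (hstep : ∀ U, P U → ∃ b ∈ U, ∃ W ⊆ U, P W ∧ ∀ w ∈ W, R b w)
    {U : Set α} (hU : P U) :
    ∃ a : ℕ → α, (∀ n, a n ∈ U) ∧ ∀ ⦃n m⦄, n < m → R (a n) (a m) := by
  choose b hbU W hWU hW hR using hstep
  let V : ℕ → {V : Set α // P V} := fun n => n.rec ⟨U, hU⟩ fun _ V => ⟨W V.1 V.2, hW V.1 V.2⟩
  have hV : Antitone fun n => (V n).1 := antitone_nat_of_succ_le fun n => hWU _ _
  refine ⟨fun n => b (V n).1 (V n).2, fun n => hV n.zero_le (hbU _ _), fun n m hnm => ?_⟩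
  -- `n < m` is `n + 1 ≤ m`, so `a m` lies in `V (n + 1)`, the set `W` chosen for `V n`.
  exact hR _ _ _ (hV hnm (hbU _ _))

section Tree

variable {S : Type*} [PartialOrder S] (htree : ∀ t a b : S, a < t → b < t → a ≤ b ∨ b ≤ a)
include htree

theorem le_or_le_of_le_of_le {a b t : S} (ha : a ≤ t) (hb : b ≤ t) : a ≤ b ∨ b ≤ a := by
  rcases ha.lt_or_eq with ha | rfl
  · rcases hb.lt_or_eq with hb | rfl
    · exact htree t a b ha hb
    · exact .inl ha.le
  · exact .inr hb

variable (hchain : ∀ C : Set S, (∀ a ∈ C, ∀ b ∈ C, a ≤ b ∨ b ≤ a) → C.Countable)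
include hchain

theorem exists_uncountable_incompRel {U : Set S} (hU : ¬ U.Countable) :
    ∃ b ∈ U, ∃ W ⊆ U, ¬ W.Countable ∧ ∀ w ∈ W, IncompRel (· ≤ ·) b w := by
  obtain ⟨a, haU, b, hbU, hab, hba⟩ : ∃ a ∈ U, ∃ b ∈ U, ¬ a ≤ b ∧ ¬ b ≤ a := by
    by_contra! h
    exact hU (hchain U fun a ha b hb => or_iff_not_imp_left.2 (h a ha b hb))
  by_cases hinc : ({t ∈ U | IncompRel (· ≤ ·) a t} : Set S).Countable
  · have hbelow : ({t | t ≤ a} : Set S).Countable :=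
      hchain _ fun x hx y hy => le_or_le_of_le_of_le htree hx hy
    have habove : ¬ ({t ∈ U | a ≤ t} : Set S).Countable := by
      refine fun habove => hU ((hbelow.union habove).union hinc |>.mono fun t ht => ?_)
      by_cases hta : t ≤ a
      · exact .inl (.inl hta)
      by_cases hat : a ≤ t
      · exact .inl (.inr ⟨ht, hat⟩)
      · exact .inr ⟨ht, hat, hta⟩
    refine ⟨b, hbU, _, sep_subset _ _, habove, fun t ⟨_, hat⟩ => ⟨fun hbt => ?_, fun htb => ?_⟩⟩
    · exact (le_or_le_of_le_of_le htree hat hbt).elim hab hba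
    · exact hab (hat.trans htb)
  · exact ⟨a, haU, _, sep_subset _ _, hinc, fun t ht => ht.2⟩

theorem exists_seq_pairwise_incompRel {U : Set S} (hU : ¬ U.Countable) :
    ∃ a : ℕ → S, (∀ n, a n ∈ U) ∧ Pairwise fun n m => IncompRel (· ≤ ·) (a n) (a m) := by
  obtain ⟨a, haU, hinc⟩ := exists_seq_rel_of_forall_exists_subset
    (fun _ => exists_uncountable_incompRel htree hchain) hU
  refine ⟨a, haU, fun n m hnm => ?_⟩
  rcases hnm.lt_or_gt with h | h
  exacts [hinc h, (hinc h).symm]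

end Tree

theorem no_uncountable_finitely_covered_subset_general (S : Type) [PartialOrder S]
    (htree : ∀ t a b : S, a < t → b < t → a ≤ b ∨ b ≤ a)
    (hchain : ∀ C : Set S, (∀ a ∈ C, ∀ b ∈ C, a ≤ b ∨ b ≤ a) → C.Countable) :
    ¬ ∃ T : Set S, ¬ T.Countable ∧
      ∀ A ⊆ T, A.Countable → ∃ F : Finset S, ∀ a ∈ A, ∃ f ∈ F, a ≤ f := by
  rintro ⟨T, hT, hcover⟩
  obtain ⟨a, haT, hinc⟩ := exists_seq_pairwise_incompRel htree hchain hT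
  obtain ⟨F, hF⟩ := hcover (range a) (range_subset_iff.2 haT) (countable_range a)
  choose f hfF hle using fun n => hF (a n) ⟨n, rfl⟩
  obtain ⟨n, m, hnm, hf⟩ :=
    Finite.exists_ne_map_eq_of_infinite fun n => (⟨f n, hfF n⟩ : F)
  have hfnm : f n = f m := congrArg Subtype.val hf
  exact (le_or_le_of_le_of_le htree (hle n) (hfnm ▸ hle m)).elim (hinc hnm).1 (hinc hnm).2

/-- Let `S` be an `ω₁`-tree (a well-founded partial order of cardinality
`ℵ₁` whose predecessor sets are chains) with no uncountable chains, in which every node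
has uncountably many nodes above it. Then there is no uncountable `T ⊆ S` such that
every countable `A ⊆ T` is covered from above by a finite `F ⊆ S`. -/
theorem no_uncountable_finitely_covered_subset (S : Type) [PartialOrder S]
    (hcard : Cardinal.mk S = Cardinal.aleph 1) (hwf : WellFoundedLT S)
    (htree : ∀ t a b : S, a < t → b < t → a ≤ b ∨ b ≤ a)
    (hchain : ∀ C : Set S, (∀ a ∈ C, ∀ b ∈ C, a ≤ b ∨ b ≤ a) → C.Countable)
    (habove : ∀ s : S, ¬ {t : S | s ≤ t}.Countable) :
    ¬ ∃ T : Set S, ¬ T.Countable ∧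
      ∀ A ⊆ T, A.Countable → ∃ F : Finset S, ∀ a ∈ A, ∃ f ∈ F, a ≤ f :=
  no_uncountable_finitely_covered_subset_general S htree hchain
end

section
/- Let R be an ω₁-tree with no uncountable antichains (a Suslin tree) with a minimum element, in which every node has uncountably many successors. For every function f : R \ {min(R)} → R that is regressive (f(x) < x for all x), there is an uncountable U ⊆ R \ {min(R)} and a single s ∈ R with f(x) = s for all x ∈ U. -/
/-!
Rank the tree by height. Each level is an antichain, hence countable, so every countable height
is attained and only countably many nodes lie below any countable height. If all fibres of `f`
were countable, the regressive map `β ↦ height (f xβ)` (with `xβ` a node of height `β`) would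
have countable preimages of every countable initial segment. The set of `β` with
`height (f xβ) < c` is then bounded by some `F c < ω₁`, and at a closure point `λ < ω₁` of `F`
regressivity gives `height (f xλ) < c` for some `c < λ`, whence `λ < F c ≤ λ`.
-/

open Cardinal Ordinal Set

theorem exists_not_countable_inter_preimage_singleton {α β : Type*} {f : α → β} {s : Set α}
    {t : Set β} (hs : ¬ s.Countable) (hst : MapsTo f s t) (ht : t.Countable) :
    ∃ b ∈ t, ¬ (s ∩ f ⁻¹' {b}).Countable := by
  by_contra! h
  exact hs ((ht.biUnion h).mono fun a ha =>
    mem_biUnion (hst ha) (show a ∈ s ∩ f ⁻¹' {f a} from ⟨ha, rfl⟩))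

namespace Ordinal

theorem countable_Iio_of_lt_omega_one {o : Ordinal} (ho : o < ω₁) : (Iio o).Countable := by
  rw [← le_aleph0_iff_set_countable, Cardinal.mk_Iio_ordinal, lift_le_aleph0,
    ← lt_aleph_one_iff, ← lt_omega_iff_card_lt]
  exact ho

theorem exists_lt_omega_one_subset_Iio {s : Set Ordinal} (hs : s.Countable)
    (hs₁ : s ⊆ Iio ω₁) : ∃ b < ω₁, s ⊆ Iio b := by
  have := hs.to_subtype
  refine ⟨⨆ x : s, Order.succ x.1,
    iSup_lt_omega_one fun x => (isSuccLimit_omega 1).succ_lt (hs₁ x.2), fun x hx => ?_⟩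
  exact (Order.lt_succ x).trans_le (Ordinal.le_iSup (fun x : s => Order.succ x.1) ⟨x, hx⟩)

theorem exists_lt_omega_one_not_countable_preimage_Iio {g : Ordinal → Ordinal}
    (hg : ∀ β ∈ Ioo 0 ω₁, g β < β) : ∃ c < ω₁, ¬ (Ioo 0 ω₁ ∩ g ⁻¹' Iio c).Countable := by
  by_contra! h
  have hbound : ∀ c, ∃ b, c < ω₁ → b < ω₁ ∧ Ioo 0 ω₁ ∩ g ⁻¹' Iio c ⊆ Iio b := by
    intro c
    by_cases hc : c < ω₁
    · obtain ⟨b, hb, hsub⟩ := exists_lt_omega_one_subset_Iio (h c hc) fun β hβ => hβ.1.2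
      exact ⟨b, fun _ => ⟨hb, hsub⟩⟩
    · exact ⟨0, fun h => absurd h hc⟩
  choose F hF using hbound
  have hl : nfp F 1 ∈ Ioo 0 ω₁ :=
    ⟨zero_lt_one.trans_le (le_nfp F 1),
      nfp_lt_ord (by simp) (fun c hc => (hF c hc).1) (one_lt_omega0.trans omega0_lt_omega_one)⟩
  obtain ⟨n, hn⟩ := lt_nfp_iff.mp (hg _ hl)
  have hlt : nfp F 1 < F^[n + 1] 1 := by
    rw [Function.iterate_succ_apply']
    exact (hF _ ((iterate_le_nfp F 1 n).trans_lt hl.2)).2 ⟨hl, hn⟩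
  exact hlt.not_ge (iterate_le_nfp F 1 (n + 1))

end Ordinal

theorem rank_eq_zero_of_isMin {α : Type*} [Preorder α] [WellFoundedLT α] {m : α} (hm : IsMin m) :
    IsWellFounded.rank (· < ·) m = 0 := by
  rw [IsWellFounded.rank_eq]
  have : IsEmpty {b // b < m} := ⟨fun b => hm.not_lt b.2⟩
  exact Ordinal.iSup_eq_zero_iff.mpr isEmptyElim

section Tree

variable {R : Type*} [PartialOrder R] [WellFoundedLT R]

theorem isAntichain_setOf_rank_eq (o : Ordinal) :
    IsAntichain (· ≤ ·) {y : R | IsWellFounded.rank (· < ·) y = o} := fun _ ha _ hb hab hle =>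
  (WellFoundedLT.rank_strictMono (hle.lt_of_ne hab)).ne (ha.trans hb.symm)

theorem countable_setOf_rank_lt (hanti : ∀ A : Set R, IsAntichain (· ≤ ·) A → A.Countable)
    {c : Ordinal} (hc : c < ω₁) : {y : R | IsWellFounded.rank (· < ·) y < c}.Countable := by
  have hsub : {y : R | IsWellFounded.rank (· < ·) y < c} ⊆
      ⋃ o ∈ Iio c, {y | IsWellFounded.rank (· < ·) y = o} := fun _ hy =>
    mem_iUnion₂.mpr ⟨_, hy, rfl⟩
  exact ((countable_Iio_of_lt_omega_one hc).biUnion fun o _ =>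
    hanti _ (isAntichain_setOf_rank_eq o)).mono hsub

theorem mem_range_rank_of_lt_omega_one [Uncountable R]
    (hanti : ∀ A : Set R, IsAntichain (· ≤ ·) A → A.Countable) {o : Ordinal} (ho : o < ω₁) :
    o ∈ range (IsWellFounded.rank (α := R) (· < ·)) := by
  by_contra h
  have hlt : ∀ y : R, IsWellFounded.rank (· < ·) y < o := fun y =>
    not_le.mp fun hle => h (IsWellFounded.mem_range_rank_of_le hle)
  exact not_countable_univ (by simpa [hlt] using countable_setOf_rank_lt hanti ho)

theorem exists_lt_omega_one_not_countable_setOf_rank_apply_lt [Uncountable R]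
    (hanti : ∀ A : Set R, IsAntichain (· ≤ ·) A → A.Countable) {m : R} (hm : IsMin m)
    {f : R → R} (hreg : ∀ x, x ≠ m → f x < x) :
    ∃ c < ω₁, ¬ {y | y ≠ m ∧ IsWellFounded.rank (· < ·) (f y) < c}.Countable := by
  have : Nonempty R := ⟨m⟩
  set x := Function.invFun (IsWellFounded.rank (α := R) (· < ·))
  have hx : ∀ β < ω₁, IsWellFounded.rank (· < ·) (x β) = β := fun β hβ =>
    Function.invFun_eq (mem_range_rank_of_lt_omega_one hanti hβ)
  have hxm : ∀ β ∈ Ioo 0 ω₁, x β ≠ m := fun β hβ h =>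
    hβ.1.ne' (by rw [← hx β hβ.2, h, rank_eq_zero_of_isMin hm])
  set g := fun β => IsWellFounded.rank (· < ·) (f (x β))
  obtain ⟨c, hc, hS⟩ := exists_lt_omega_one_not_countable_preimage_Iio (g := g) fun β hβ =>
    (WellFoundedLT.rank_strictMono (hreg _ (hxm β hβ))).trans_eq (hx β hβ.2)
  have hmaps : MapsTo x (Ioo 0 ω₁ ∩ g ⁻¹' Iio c)
      {y | y ≠ m ∧ IsWellFounded.rank (· < ·) (f y) < c} := fun β hβ => ⟨hxm β hβ.1, hβ.2⟩
  have hinj : InjOn x (Ioo 0 ω₁) := fun β hβ γ hγ h =>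
    (hx β hβ.2).symm.trans ((congrArg _ h).trans (hx γ hγ.2))
  exact ⟨c, hc, fun hct => hS (hmaps.countable_of_injOn (hinj.mono inter_subset_left) hct)⟩

end Tree

theorem suslin_pressing_down_general (R : Type) [PartialOrder R]
    (hcard : Cardinal.mk R = Cardinal.aleph 1) (hwf : WellFoundedLT R)
    (hanti : ∀ A : Set R, (∀ a ∈ A, ∀ b ∈ A, a ≠ b → ¬ (a ≤ b ∨ b ≤ a)) → A.Countable)
    (m : R) (hm : ∀ x : R, m ≤ x)
    (f : R → R) (hreg : ∀ x : R, x ≠ m → f x < x) :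
    ∃ U : Set R, ¬ U.Countable ∧ (∀ x ∈ U, x ≠ m) ∧ ∃ s : R, ∀ x ∈ U, f x = s := by
  have hantichain : ∀ A : Set R, IsAntichain (· ≤ ·) A → A.Countable := fun A hA =>
    hanti A fun a ha b hb hab hle => hle.elim (hA ha hb hab) (hA hb ha hab.symm)
  have : Uncountable R := by
    rw [← aleph0_lt_mk_iff, hcard]
    exact aleph0_lt_aleph_one
  obtain ⟨c, hc, hS⟩ :=
    exists_lt_omega_one_not_countable_setOf_rank_apply_lt hantichain (IsBot.isMin hm) hreg
  obtain ⟨s, -, hs⟩ := exists_not_countable_inter_preimage_singleton (f := f) hS (fun y hy => hy.2)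
    (countable_setOf_rank_lt hantichain hc)
  exact ⟨_, hs, fun y hy => hy.1.1, s, fun y hy => hy.2⟩

/-- Pressing-down lemma for Suslin trees. Let `R` be a Suslin tree (an
`ω₁`-tree with no uncountable chains or antichains, every node having uncountably many
nodes above it) with a minimum element `m`. For every regressive
`f : R \ {m} → R` (`f x < x`), there is an uncountable `U ⊆ R \ {m}` on which `f` is
constant. -/
theorem suslin_pressing_down (R : Type) [PartialOrder R]
    (hcard : Cardinal.mk R = Cardinal.aleph 1) (hwf : WellFoundedLT R)
    (htree : ∀ t a b : R, a < t → b < t → a ≤ b ∨ b ≤ a)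
    (hchain : ∀ C : Set R, (∀ a ∈ C, ∀ b ∈ C, a ≤ b ∨ b ≤ a) → C.Countable)
    (hanti : ∀ A : Set R, (∀ a ∈ A, ∀ b ∈ A, a ≠ b → ¬ (a ≤ b ∨ b ≤ a)) → A.Countable)
    (habove : ∀ s : R, ¬ {t : R | s ≤ t}.Countable)
    (m : R) (hm : ∀ x : R, m ≤ x)
    (f : R → R) (hreg : ∀ x : R, x ≠ m → f x < x) :
    ∃ U : Set R, ¬ U.Countable ∧ (∀ x ∈ U, x ≠ m) ∧ ∃ s : R, ∀ x ∈ U, f x = s :=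
  suslin_pressing_down_general R hcard hwf hanti m hm f hreg
end
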